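/- Let (F_n, T_n, q_n) be an odometer datum with inverse limit Z and induced odometer T : Z → Z. If the number of orbits of T_n on F_n is unbounded as n → ∞, then Z contains an infinite family of pairwise disjoint nonempty closed T-invariant subsets; in particular, T has infinitely many distinct minimal sets in Z. -/

import Mathlib

/-- A set `s ⊆ F` is an orbit of the permutation `T` if it is the full `ℤ`-orbit of
some point. -/
def IsOrbitOf {F : Type*} (T : Equiv.Perm F) (s : Set F) : Prop :=
  ∃ x : F, s = Set.range fun k : ℤ => (T ^ k) x

/-- The odometer induced on the inverse limit
`Z = { z ∈ ∏ n, F n | ∀ n, q n (z (n+1)) = z n }`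
by a compatible sequence of bijections `T n : F n ≃ F n`. -/
def odoPerm (F : ℕ → Type*) (T : ∀ n, Equiv.Perm (F n)) (q : ∀ n, F (n + 1) → F n)
    (hcomm : ∀ n x, q n (T (n + 1) x) = T n (q n x)) :
    Equiv.Perm { z : ∀ n, F n // ∀ n, q n (z (n + 1)) = z n } where
  toFun z := ⟨fun n => T n (z.1 n), fun n => by rw [hcomm, z.2]⟩
  invFun z := ⟨fun n => (T n).symm (z.1 n), fun n => by
    rw [Equiv.eq_symm_apply, ← hcomm, Equiv.apply_symm_apply, z.2]⟩
  left_inv z := Subtype.ext (funext fun n => (T n).symm_apply_apply _)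
  right_inv z := Subtype.ext (funext fun n => (T n).apply_symm_apply _)

/-!
Call the sequence of level-`n` orbits of the coordinates of `z ∈ Z` its orbit profile. The fibres
of the profile are closed (the levels are discrete) and `T`-invariant (`T` moves each coordinate
within its orbit), and every `T`-orbit is dense in its fibre: a neighbourhood of `w` contains all
points agreeing with `w` at some level `n`, and some power of `T` carries `z` to such a point as
soon as `z n` and `w n` lie in the same `T n`-orbit. Because the bonding maps are surjective, every
point of `F n` lifts to `Z`, so every orbit of `T n` occurs in some profile; as the number of these
orbits is unbounded, there are infinitely many profiles, and distinct fibres are disjoint.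
-/

open Function Set

namespace Equiv.Perm

variable {α : Type*} (T : Perm α)

def orbit (x : α) : Set α := range fun k : ℤ => (T ^ k) x

lemma mem_orbit_self (x : α) : x ∈ T.orbit x := ⟨0, rfl⟩

lemma orbit_zpow_apply (j : ℤ) (x : α) : T.orbit ((T ^ j) x) = T.orbit x := by
  have : (fun k : ℤ => (T ^ k) ((T ^ j) x)) = (fun k : ℤ => (T ^ k) x) ∘ (· + j) := by
    funext k
    rw [comp_apply, zpow_add, mul_apply]
  rw [orbit, this, (add_right_surjective j).range_comp]
  rfl

lemma orbit_apply (x : α) : T.orbit (T x) = T.orbit x := by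
  simpa using T.orbit_zpow_apply 1 x

end Equiv.Perm

section InverseLimit

variable {F : ℕ → Type*} (q : ∀ n, F (n + 1) → F n)

abbrev InverseLimit : Type _ := { z : ∀ n, F n // ∀ n, q n (z (n + 1)) = z n }

namespace InverseLimit

variable {q}

theorem surjective_apply (hq : ∀ n, Surjective (q n)) (n : ℕ) :
    Surjective fun z : InverseLimit q => z.1 n := by
  induction n generalizing F with
  | zero =>
    intro x
    choose s hs using hq
    exact ⟨⟨fun m => Nat.rec (motive := F) x s m, fun m => hs m _⟩, rfl⟩
  | succ n ih =>
    intro x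
    -- a thread of the shifted system, extended by one term at the bottom
    obtain ⟨z, hzx⟩ := ih (fun m => hq (m + 1)) x
    refine ⟨⟨fun m => Nat.casesOn (motive := F) m (q 0 (z.1 0)) z.1, ?_⟩, hzx⟩
    rintro (_ | m)
    · rfl
    · exact z.2 m

theorem apply_eq_of_le {z w : InverseLimit q} {m n : ℕ} (hmn : m ≤ n) (h : z.1 n = w.1 n) :
    z.1 m = w.1 m := by
  induction n, hmn using Nat.le_induction with
  | base => exact h
  | succ n _ ih => exact ih (by rw [← z.2 n, ← w.2 n, h])

variable [∀ n, TopologicalSpace (F n)]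

theorem exists_level_subset {U : Set (InverseLimit q)} (hU : IsOpen U) {w : InverseLimit q}
    (hw : w ∈ U) : ∃ n, ∀ v : InverseLimit q, v.1 n = w.1 n → v ∈ U := by
  obtain ⟨V, hV, rfl⟩ := isOpen_induced_iff.mp hU
  obtain ⟨I, u, hu, hIV⟩ := isOpen_pi_iff.mp hV w.1 hw
  refine ⟨I.sup id, fun v hv => hIV fun i hi => ?_⟩
  rw [apply_eq_of_le (m := i) (Finset.le_sup (f := id) hi) hv]
  exact (hu i hi).2

theorem isClosed_setOf_apply_mem [∀ n, DiscreteTopology (F n)] (S : ∀ n, Set (F n)) :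
    IsClosed {z : InverseLimit q | ∀ n, z.1 n ∈ S n} := by
  rw [ofPred_forall]
  exact isClosed_iInter fun n =>
    (isClosed_discrete (S n)).preimage ((continuous_apply n).comp continuous_subtype_val)

end InverseLimit

end InverseLimit

section Odometer

variable {F : ℕ → Type*} {T : ∀ n, Equiv.Perm (F n)} {q : ∀ n, F (n + 1) → F n}
  (hcomm : ∀ n x, q n (T (n + 1) x) = T n (q n x))

theorem odoPerm_zpow_apply (k : ℤ) (z : InverseLimit q) (n : ℕ) :
    ((odoPerm F T q hcomm ^ k) z).1 n = (T n ^ k) (z.1 n) := by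
  induction k using Int.induction_on generalizing z with
  | zero => rfl
  | succ k ih => rw [zpow_add_one, zpow_add_one, Equiv.Perm.mul_apply, ih]; rfl
  | pred k ih => rw [zpow_sub_one, zpow_sub_one, Equiv.Perm.mul_apply, ih]; rfl

variable (T) in
def orbitProfile (z : InverseLimit q) (n : ℕ) : Set (F n) := (T n).orbit (z.1 n)

theorem orbitProfile_odoPerm (z : InverseLimit q) :
    orbitProfile T (odoPerm F T q hcomm z) = orbitProfile T z :=
  funext fun n => (T n).orbit_apply (z.1 n)

theorem odoPerm_image_orbitProfile_fiber (c : ∀ n, Set (F n)) :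
    odoPerm F T q hcomm '' (orbitProfile T ⁻¹' {c}) = orbitProfile T ⁻¹' {c} := by
  ext z
  rw [Equiv.image_eq_preimage_symm, mem_preimage, mem_preimage, mem_preimage,
    ← orbitProfile_odoPerm hcomm, Equiv.apply_symm_apply]

theorem isClosed_orbitProfile_fiber [∀ n, TopologicalSpace (F n)] [∀ n, DiscreteTopology (F n)]
    (c : ∀ n, Set (F n)) : IsClosed (orbitProfile T ⁻¹' {c} : Set (InverseLimit q)) := by
  have : orbitProfile T ⁻¹' {c} =
      {z : InverseLimit q | ∀ n, z.1 n ∈ {x | (T n).orbit x = c n}} :=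
    ext fun _ => funext_iff
  exact this ▸ InverseLimit.isClosed_setOf_apply_mem _

theorem mem_closure_odoPerm_orbit_of_orbitProfile_eq [∀ n, TopologicalSpace (F n)]
    [∀ n, DiscreteTopology (F n)] {z w : InverseLimit q}
    (h : orbitProfile T z = orbitProfile T w) :
    w ∈ closure (range fun k : ℤ => (odoPerm F T q hcomm ^ k) z) := by
  refine mem_closure_iff.mpr fun U hU hwU => ?_
  obtain ⟨n, hn⟩ := InverseLimit.exists_level_subset hU hwU
  obtain ⟨k, hk⟩ : w.1 n ∈ (T n).orbit (z.1 n) := by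
    have hzw : (T n).orbit (z.1 n) = (T n).orbit (w.1 n) := congrFun h n
    exact hzw ▸ (T n).mem_orbit_self (w.1 n)
  exact ⟨_, hn _ ((odoPerm_zpow_apply hcomm k z n).trans hk), k, rfl⟩

theorem infinite_range_orbitProfile (hq : ∀ n, Surjective (q n))
    (hunbounded : ∀ N : ℕ, ∃ n : ℕ, N ≤ Nat.card { s : Set (F n) // IsOrbitOf (T n) s }) :
    (range (orbitProfile T : InverseLimit q → _)).Infinite := by
  intro hfin
  have := hfin.to_subtype
  obtain ⟨n, hn⟩ := hunbounded (Nat.card (range (orbitProfile T : InverseLimit q → _)) + 1)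
  let level :
      range (orbitProfile T : InverseLimit q → _) → { s : Set (F n) // IsOrbitOf (T n) s } :=
    fun c => ⟨c.1 n, by obtain ⟨z, hz⟩ := c.2; exact ⟨z.1 n, hz ▸ rfl⟩⟩
  have hlevel : Surjective level := by
    rintro ⟨s, x, rfl⟩
    obtain ⟨z, rfl⟩ := InverseLimit.surjective_apply hq n x
    exact ⟨⟨_, z, rfl⟩, rfl⟩
  have := Nat.card_le_card_of_surjective level hlevel
  omega

end Odometer

theorem odometer_unbounded_orbit_count_infinitely_many_minimal_sets_general
    (F : ℕ → Type*) [∀ n, TopologicalSpace (F n)] [∀ n, DiscreteTopology (F n)]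
    (T : ∀ n, Equiv.Perm (F n)) (q : ∀ n, F (n + 1) → F n)
    (hq : ∀ n, Function.Surjective (q n))
    (hcomm : ∀ n x, q n (T (n + 1) x) = T n (q n x))
    (hunbounded : ∀ N : ℕ, ∃ n : ℕ, N ≤ Nat.card { s : Set (F n) // IsOrbitOf (T n) s }) :
    ∃ C : ℕ → Set { z : ∀ n, F n // ∀ n, q n (z (n + 1)) = z n },
      Pairwise (Function.onFun Disjoint C) ∧
      (∀ i, (C i).Nonempty) ∧
      (∀ i, IsClosed (C i)) ∧
      (∀ i, (odoPerm F T q hcomm) '' (C i) = C i) ∧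
      (∀ i, ∀ z ∈ C i,
        C i ⊆ closure (Set.range fun k : ℤ => ((odoPerm F T q hcomm) ^ k) z)) := by
  let c := (infinite_range_orbitProfile (T := T) hq hunbounded).natEmbedding
  refine ⟨fun i => orbitProfile T ⁻¹' {(c i).1}, fun i j hij => ?_, fun i => (c i).2,
    fun i => isClosed_orbitProfile_fiber _, fun i => odoPerm_image_orbitProfile_fiber hcomm _,
    fun i z hz w hw => mem_closure_odoPerm_orbit_of_orbitProfile_eq hcomm (hz.trans hw.symm)⟩
  exact (disjoint_singleton.mpr fun h => hij (c.injective (Subtype.ext h))).preimage _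

/-- **Case (3) of Theorem 5.3 (dynamical core).**
Let `(F n, T n, q n)` be an odometer datum with inverse limit `Z` and induced odometer
`T`.  If the number of orbits of `T n` on `F n` is unbounded as `n → ∞`, then `Z`
contains an infinite family of pairwise disjoint nonempty closed `T`-invariant subsets;
in particular `T` has infinitely many distinct minimal sets in `Z`. -/
theorem odometer_unbounded_orbit_count_infinitely_many_minimal_sets
    (F : ℕ → Type*) [∀ n, TopologicalSpace (F n)] [∀ n, DiscreteTopology (F n)]
    [∀ n, Fintype (F n)] [∀ n, Nonempty (F n)]
    (T : ∀ n, Equiv.Perm (F n)) (q : ∀ n, F (n + 1) → F n)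
    (hq : ∀ n, Function.Surjective (q n))
    (hcomm : ∀ n x, q n (T (n + 1) x) = T n (q n x))
    (hunbounded : ∀ N : ℕ, ∃ n : ℕ, N ≤ Nat.card { s : Set (F n) // IsOrbitOf (T n) s }) :
    ∃ C : ℕ → Set { z : ∀ n, F n // ∀ n, q n (z (n + 1)) = z n },
      Pairwise (Function.onFun Disjoint C) ∧
      (∀ i, (C i).Nonempty) ∧
      (∀ i, IsClosed (C i)) ∧
      (∀ i, (odoPerm F T q hcomm) '' (C i) = C i) ∧
      (∀ i, ∀ z ∈ C i,
        C i ⊆ closure (Set.range fun k : ℤ => ((odoPerm F T q hcomm) ^ k) z)) :=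
  odometer_unbounded_orbit_count_infinitely_many_minimal_sets_general F T q hq hcomm hunbounded
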